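/- There is an absolute constant C such that for all real β₁, β₂ and all N ≥ 1, |∫_0^N e(β₁γ + β₂γ²) dγ| ≤ C·N·(1 + |β₁|N + |β₂|N²)^{−1/2}. -/

import Mathlib

open Real Complex MeasureTheory intervalIntegral Set

noncomputable def F (μ : ℝ) (x : ℝ) : ℂ := Complex.exp ((μ:ℂ) * I * (x:ℂ)^2)

lemma absF (μ x : ℝ) : ‖F μ x‖ = 1 := by
  have : ((μ:ℂ) * I * (x:ℂ)^2) = ((μ * x^2 : ℝ) : ℂ) * I := by push_cast; ring
  rw [F, this, Complex.norm_exp_ofReal_mul_I]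

lemma contF (μ : ℝ) : Continuous (F μ) := by
  unfold F; fun_prop

lemma intIntF (μ a b : ℝ) : IntervalIntegrable (F μ) volume a b :=
  (contF μ).intervalIntegrable a b

lemma hasDerivF (μ : ℝ) (x : ℝ) :
    HasDerivAt (F μ) (((2*μ*x : ℝ):ℂ) * I * F μ x) x := by
  have h : HasDerivAt (fun z : ℂ => Complex.exp ((μ:ℂ) * I * z^2))
      (Complex.exp ((μ:ℂ) * I * (x:ℂ)^2) * ((μ:ℂ) * I * (↑2 * (x:ℂ)^(2-1)))) (x:ℂ) :=
    (((hasDerivAt_pow 2 (x:ℂ)).const_mul ((μ:ℂ)*I))).cexp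
  have := h.comp_ofReal
  convert this using 1
  · unfold F; rfl
  unfold F
  push_cast
  ring

lemma tailF (μ a b : ℝ) (hμ : 0 < μ) (ha : 0 < a) (hab : a ≤ b) :
    ‖∫ x in a..b, F μ x‖ ≤ 1/(μ*a) := by
  set u : ℝ → ℂ := fun x => (2*(μ:ℂ)*I)⁻¹ * ((x:ℂ))⁻¹ with hu_def
  set u' : ℝ → ℂ := fun x => (2*(μ:ℂ)*I)⁻¹ * (-(((x:ℂ))^2)⁻¹) with hu'_def
  have hI : (2*(μ:ℂ)*I) ≠ 0 := by
    simp [Complex.ext_iff, I_ne_zero, hμ.ne']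
  have hxpos : ∀ x ∈ Set.uIcc a b, 0 < x := by
    intro x hx
    rw [uIcc_of_le hab] at hx
    exact lt_of_lt_of_le ha hx.1
  have hu : ∀ x ∈ Set.uIcc a b, HasDerivAt u (u' x) x := by
    intro x hx
    have hx0 : (x:ℂ) ≠ 0 := by
      exact_mod_cast (hxpos x hx).ne'
    exact ((hasDerivAt_inv hx0).comp_ofReal).const_mul _
  have hv : ∀ x ∈ Set.uIcc a b, HasDerivAt (F μ) (((2*μ*x : ℝ):ℂ) * I * F μ x) x :=
    fun x _ => hasDerivF μ x
  have hu'int : IntervalIntegrable u' volume a b := by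
    apply ContinuousOn.intervalIntegrable
    refine continuousOn_const.mul (ContinuousOn.neg (ContinuousOn.inv₀ (by fun_prop) ?_))
    intro x hx
    have hx0 : (x:ℂ) ≠ 0 := by exact_mod_cast (hxpos x hx).ne'
    exact pow_ne_zero 2 hx0
  have hv'int : IntervalIntegrable (fun x => ((2*μ*x : ℝ):ℂ) * I * F μ x) volume a b := by
    apply ContinuousOn.intervalIntegrable
    apply ContinuousOn.mul (by fun_prop)
    exact (contF μ).continuousOn
  have ibp := integral_mul_deriv_eq_deriv_mul hu hv hu'int hv'int
  have key : (∫ x in a..b, F μ x) = ∫ x in a..b, u x * (((2*μ*x : ℝ):ℂ) * I * F μ x) := by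
    apply integral_congr
    intro x hx
    have hx0 : (x:ℂ) ≠ 0 := by exact_mod_cast (hxpos x hx).ne'
    have hμ0 : (μ:ℂ) ≠ 0 := by exact_mod_cast hμ.ne'
    simp only [hu_def]
    push_cast
    field_simp
  rw [key, ibp]
  have habs_u : ∀ x : ℝ, 0 < x → ‖u x‖ = 1/(2*μ*x) := by
    intro x hx
    simp only [hu_def, norm_mul, norm_inv, Complex.norm_real, Complex.norm_two, Complex.norm_I,
      Real.norm_eq_abs, abs_of_pos hμ, abs_of_pos hx]
    field_simp
  have hbpos : 0 < b := lt_of_lt_of_le ha hab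
  have habsc : ‖(2*(μ:ℂ)*I)⁻¹‖ = (2*μ)⁻¹ := by
    rw [norm_inv, norm_mul, norm_mul, Complex.norm_two, Complex.norm_real, Complex.norm_I,
      Real.norm_eq_abs, abs_of_pos hμ, mul_one]
  have habs_u' : ∀ x : ℝ, 0 < x → ‖u' x‖ = (2*μ)⁻¹ * (x^2)⁻¹ := by
    intro x hx
    rw [hu'_def]
    simp only [norm_mul, habsc, norm_neg, norm_inv, norm_pow, Complex.norm_real,
      Real.norm_eq_abs, abs_of_pos hx]
  have h0notin : (0:ℝ) ∉ Set.uIcc a b := by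
    rw [Set.uIcc_of_le hab]
    intro h
    exact absurd h.1 (not_le.2 ha)
  have h3 : ‖∫ x in a..b, u' x * F μ x‖ ≤ (2*μ)⁻¹ * (a⁻¹ - b⁻¹) := by
    have hb1 : ‖∫ x in a..b, u' x * F μ x‖ ≤ ∫ x in a..b, ‖u' x * F μ x‖ :=
      intervalIntegral.norm_integral_le_integral_norm hab
    have heq : (∫ x in a..b, ‖u' x * F μ x‖) = ∫ x in a..b, (2*μ)⁻¹ * (x:ℝ)^(-2:ℤ) := by
      apply integral_congr
      intro x hx
      have hx0 : 0 < x := hxpos x hx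
      show ‖u' x * F μ x‖ = (2*μ)⁻¹ * (x:ℝ)^(-2:ℤ)
      rw [norm_mul, absF, mul_one, habs_u' x hx0]
      rw [zpow_neg, zpow_two]
      ring_nf
    have hzpow : (∫ x in a..b, (x:ℝ)^(-2:ℤ)) = a⁻¹ - b⁻¹ := by
      rw [integral_zpow (Or.inr ⟨by norm_num, h0notin⟩)]
      norm_num
      ring
    calc ‖∫ x in a..b, u' x * F μ x‖ ≤ ∫ x in a..b, ‖u' x * F μ x‖ := hb1
      _ = (2*μ)⁻¹ * (a⁻¹ - b⁻¹) := by
          rw [heq, intervalIntegral.integral_const_mul, hzpow]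
  have hub : ‖u b‖ = 1/(2*μ*b) := habs_u b hbpos
  have hua : ‖u a‖ = 1/(2*μ*a) := habs_u a ha
  have h4 : ‖u b * F μ b‖ = 1/(2*μ*b) := by
    rw [norm_mul, absF, mul_one, hub]
  have h5 : ‖u a * F μ a‖ = 1/(2*μ*a) := by
    rw [norm_mul, absF, mul_one, hua]
  have step : ‖u b * F μ b - u a * F μ a - ∫ x in a..b, u' x * F μ x‖
      ≤ 1/(2*μ*b) + 1/(2*μ*a) + (2*μ)⁻¹ * (a⁻¹ - b⁻¹) := by
    have e1 : ‖u b * F μ b - u a * F μ a - ∫ x in a..b, u' x * F μ x‖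
        ≤ ‖u b * F μ b - u a * F μ a‖
          + ‖∫ x in a..b, u' x * F μ x‖ :=
      norm_sub_le _ _
    have e2 : ‖u b * F μ b - u a * F μ a‖
        ≤ ‖u b * F μ b‖ + ‖u a * F μ a‖ :=
      norm_sub_le _ _
    rw [h4, h5] at e2
    linarith
  refine step.trans (le_of_eq ?_)
  field_simp
  ring

lemma fresnel0 (μ b : ℝ) (hμ : 0 < μ) (hb : 0 ≤ b) :
    ‖∫ x in (0:ℝ)..b, F μ x‖ ≤ 2/Real.sqrt μ := by
  have hsq : 0 < Real.sqrt μ := Real.sqrt_pos.2 hμ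
  set δ := (Real.sqrt μ)⁻¹ with hδdef
  have hδ : 0 < δ := inv_pos.2 hsq
  have hδeq : 2/Real.sqrt μ = 2*δ := by rw [hδdef]; ring
  have trivbound : ∀ c d : ℝ, ‖∫ x in c..d, F μ x‖ ≤ |d - c| := by
    intro c d
    have := intervalIntegral.norm_integral_le_of_norm_le_const
      (f := F μ) (C := 1) (a := c) (b := d) (fun x _ => by
        rw [absF])
    simpa using this
  by_cases hbδ : b ≤ δ
  · have := trivbound 0 b
    rw [hδeq]
    have : |b - 0| ≤ 2*δ := by rw [_root_.abs_of_nonneg (by linarith : (0:ℝ) ≤ b - 0)]; linarith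
    linarith [trivbound 0 b]
  · push_neg at hbδ
    have hsplit : (∫ x in (0:ℝ)..b, F μ x)
        = (∫ x in (0:ℝ)..δ, F μ x) + ∫ x in δ..b, F μ x :=
      (intervalIntegral.integral_add_adjacent_intervals (intIntF μ 0 δ) (intIntF μ δ b)).symm
    have h1 := trivbound 0 δ
    have h2 := tailF μ δ b hμ hδ hbδ.le
    have hms : μ * δ = Real.sqrt μ := by
      rw [hδdef]
      field_simp
      rw [Real.sq_sqrt hμ.le]
    have hμδ : 1/(μ*δ) = δ := by rw [hms, one_div, hδdef]
    rw [hsplit, hδeq]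
    calc ‖(∫ x in (0:ℝ)..δ, F μ x) + ∫ x in δ..b, F μ x‖
        ≤ ‖∫ x in (0:ℝ)..δ, F μ x‖ + ‖∫ x in δ..b, F μ x‖ :=
          norm_add_le _ _
      _ ≤ |δ - 0| + 1/(μ*δ) := add_le_add h1 h2
      _ = 2*δ := by rw [_root_.abs_of_nonneg (by linarith : (0:ℝ) ≤ δ - 0), hμδ]; ring

lemma Feven (μ a b : ℝ) : (∫ x in a..b, F μ x) = ∫ x in -b..-a, F μ x := by
  rw [← intervalIntegral.integral_comp_neg (fun x => F μ x)]
  apply integral_congr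
  intro x _
  simp only [F]
  push_cast
  ring_nf

lemma fresnel (μ a b : ℝ) (hμ : 0 < μ) :
    ‖∫ x in a..b, F μ x‖ ≤ 4/Real.sqrt μ := by
  have key : ∀ c : ℝ, ‖∫ x in (0:ℝ)..c, F μ x‖ ≤ 2/Real.sqrt μ := by
    intro c
    rcases le_or_gt 0 c with hc | hc
    · exact fresnel0 μ c hμ hc
    · have h1 : (∫ x in (0:ℝ)..c, F μ x) = -(∫ x in c..(0:ℝ), F μ x) :=
        intervalIntegral.integral_symm c 0
      have h2 : (∫ x in c..(0:ℝ), F μ x) = ∫ x in (0:ℝ)..(-c), F μ x := by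
        rw [Feven μ c 0]
        norm_num
      rw [h1, h2, norm_neg]
      exact fresnel0 μ (-c) hμ (by linarith)
  have hsplit : (∫ x in a..b, F μ x)
      = (∫ x in a..(0:ℝ), F μ x) + ∫ x in (0:ℝ)..b, F μ x :=
    (intervalIntegral.integral_add_adjacent_intervals (intIntF μ a 0) (intIntF μ 0 b)).symm
  have ha : ‖∫ x in a..(0:ℝ), F μ x‖ ≤ 2/Real.sqrt μ := by
    rw [intervalIntegral.integral_symm, norm_neg]
    exact key a
  rw [hsplit]
  calc ‖(∫ x in a..(0:ℝ), F μ x) + ∫ x in (0:ℝ)..b, F μ x‖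
      ≤ ‖∫ x in a..(0:ℝ), F μ x‖ + ‖∫ x in (0:ℝ)..b, F μ x‖ :=
        norm_add_le _ _
    _ ≤ 2/Real.sqrt μ + 2/Real.sqrt μ := add_le_add ha (key b)
    _ = 4/Real.sqrt μ := by ring

noncomputable def G (β₁ β₂ T : ℝ) : ℂ :=
  ∫ γ in (0:ℝ)..T, Complex.exp (2 * Real.pi * Complex.I * (β₁ * γ + β₂ * γ ^ 2))

lemma abs_exp_im (c : ℂ) (h : c.re = 0) : ‖Complex.exp c‖ = 1 := by
  rw [Complex.norm_exp, h, Real.exp_zero]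

lemma re_phase (β₁ β₂ γ : ℝ) :
    (2 * (Real.pi:ℂ) * I * ((β₁:ℂ) * (γ:ℂ) + (β₂:ℂ) * (γ:ℂ) ^ 2)).re = 0 := by
  simp [Complex.mul_re, Complex.mul_im, Complex.add_re, Complex.add_im,
    ← Complex.ofReal_pow]

lemma contGint (β₁ β₂ : ℝ) :
    Continuous (fun γ : ℝ => Complex.exp (2 * Real.pi * Complex.I * (β₁ * γ + β₂ * γ ^ 2))) := by
  fun_prop

lemma trivG (β₁ β₂ T : ℝ) (hT : 0 ≤ T) : ‖G β₁ β₂ T‖ ≤ T := by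
  have := intervalIntegral.norm_integral_le_of_norm_le_const
    (f := fun γ : ℝ => Complex.exp (2 * Real.pi * Complex.I * (β₁ * γ + β₂ * γ ^ 2)))
    (C := 1) (a := (0:ℝ)) (b := T) (fun x _ => by
      rw [abs_exp_im _ (re_phase β₁ β₂ x)])
  rw [G]
  simpa [_root_.abs_of_nonneg hT] using this

lemma intervalIntegral_conj (f : ℝ → ℂ) (a b : ℝ) :
    (∫ x in a..b, (starRingEnd ℂ) (f x)) = (starRingEnd ℂ) (∫ x in a..b, f x) := by
  simp [intervalIntegral, integral_conj, map_sub]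

lemma conjG (β₁ β₂ T : ℝ) : ‖G (-β₁) (-β₂) T‖ = ‖G β₁ β₂ T‖ := by
  have h : G (-β₁) (-β₂) T = (starRingEnd ℂ) (G β₁ β₂ T) := by
    rw [G, G, ← _root_.intervalIntegral_conj]
    apply integral_congr
    intro x _
    show Complex.exp _ = (starRingEnd ℂ) (Complex.exp _)
    rw [← Complex.exp_conj]
    congr 1
    push_cast
    simp [Complex.ext_iff, Complex.mul_re, Complex.mul_im, Complex.add_re, Complex.add_im]
    ring_nf
  rw [h, Complex.norm_conj]

lemma squareG (β₁ β₂ T : ℝ) (hβ₂ : β₂ ≠ 0) :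
    G β₁ β₂ T = Complex.exp (-(2 * Real.pi * Complex.I) * β₂ * (β₁/(2*β₂):ℝ)^2)
      * ∫ u in (β₁/(2*β₂):ℝ)..(T + β₁/(2*β₂)), F (2*Real.pi*β₂) u := by
  set c : ℝ := β₁/(2*β₂) with hc
  have hshift : (∫ u in c..(T + c), F (2*Real.pi*β₂) u)
      = ∫ x in (0:ℝ)..T, F (2*Real.pi*β₂) (x + c) := by
    rw [intervalIntegral.integral_comp_add_right (F (2*Real.pi*β₂)) c]
    norm_num
  rw [hshift, ← intervalIntegral.integral_const_mul, G]
  apply integral_congr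
  intro x _
  show Complex.exp _ = _ * F (2*Real.pi*β₂) (x + c)
  rw [F, ← Complex.exp_add]
  congr 1
  have h2c : (c:ℝ) * (2*β₂) = β₁ := by rw [hc]; field_simp
  have : ((c:ℝ) : ℂ) * (2*(β₂:ℂ)) = (β₁:ℂ) := by exact_mod_cast congrArg Complex.ofReal h2c
  push_cast
  linear_combination (-2*(Real.pi:ℂ)*I*(x:ℂ)) * this

lemma linG (β₁ T : ℝ) (hβ₁ : β₁ ≠ 0) : ‖G β₁ 0 T‖ ≤ 1/(Real.pi * |β₁|) := by
  have hc : (2 * (Real.pi:ℂ) * I * (β₁:ℂ)) ≠ 0 :=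
    mul_ne_zero (mul_ne_zero (mul_ne_zero two_ne_zero
      (Complex.ofReal_ne_zero.2 Real.pi_ne_zero)) I_ne_zero)
      (Complex.ofReal_ne_zero.2 hβ₁)
  have heq : G β₁ 0 T = ∫ x in (0:ℝ)..T, Complex.exp ((2 * (Real.pi:ℂ) * I * (β₁:ℂ)) * x) := by
    rw [G]
    apply integral_congr
    intro x _
    push_cast
    ring_nf
  rw [heq, integral_exp_mul_complex hc]
  have habs : ∀ t : ℝ, ‖Complex.exp ((2 * (Real.pi:ℂ) * I * (β₁:ℂ)) * t)‖ = 1 := by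
    intro t
    apply abs_exp_im
    simp [Complex.mul_re, Complex.mul_im]
  rw [norm_div]
  have h1 : ‖Complex.exp ((2 * (Real.pi:ℂ) * I * (β₁:ℂ)) * (T:ℂ))
      - Complex.exp ((2 * (Real.pi:ℂ) * I * (β₁:ℂ)) * ((0:ℝ):ℂ))‖ ≤ 2 := by
    calc _ ≤ ‖Complex.exp ((2 * (Real.pi:ℂ) * I * (β₁:ℂ)) * (T:ℂ))‖
        + ‖Complex.exp ((2 * (Real.pi:ℂ) * I * (β₁:ℂ)) * ((0:ℝ):ℂ))‖ :=
        norm_sub_le _ _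
      _ ≤ 2 := by rw [habs T, habs 0]; norm_num
  have h2 : ‖2 * (Real.pi:ℂ) * I * (β₁:ℂ)‖ = 2 * Real.pi * |β₁| := by
    simp only [norm_mul, Complex.norm_two, Complex.norm_I, Complex.norm_real, Real.norm_eq_abs]
    rw [_root_.abs_of_pos Real.pi_pos]
    ring
  rw [h2]
  rw [div_le_div_iff₀ (by positivity) (by positivity)]
  calc ‖_‖ * (Real.pi * |β₁|) ≤ 2 * (Real.pi * |β₁|) := by
        apply mul_le_mul_of_nonneg_right h1 (by positivity)
    _ = 1 * (2 * Real.pi * |β₁|) := by ring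
  
lemma quadG (β₁ β₂ T : ℝ) (hβ₁ : β₁ ≠ 0) (hβ₂ : 0 < β₂) (hT : 0 ≤ T)
    (hbig : 2*T ≤ |β₁|/(2*β₂)) :
    ‖G β₁ β₂ T‖ ≤ 2/(Real.pi * |β₁|) := by
  set c : ℝ := β₁/(2*β₂) with hc
  set μ : ℝ := 2*Real.pi*β₂ with hμdef
  have hμ : 0 < μ := by rw [hμdef]; positivity
  have habsG : ‖G β₁ β₂ T‖ = ‖∫ u in c..(T + c), F μ u‖ := by
    rw [squareG β₁ β₂ T hβ₂.ne', norm_mul]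
    have harg : (-(2 * (Real.pi:ℂ) * Complex.I) * (β₂:ℂ) * ((c:ℝ):ℂ)^2)
        = ((-(2 * Real.pi) * β₂ * c^2 : ℝ) : ℂ) * I := by push_cast; ring
    rw [harg, Complex.norm_exp_ofReal_mul_I, one_mul]
  rw [habsG]
  rcases eq_or_lt_of_le hT with hT0 | hT0
  · rw [← hT0]
    simp
    positivity
  rcases lt_or_gt_of_ne hβ₁ with hneg | hpos
  · -- β₁ < 0, c < 0, reflect
    have hcneg : c < 0 := by rw [hc]; apply div_neg_of_neg_of_pos hneg; positivity
    have habs_c : |c| = |β₁|/(2*β₂) := by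
      rw [hc, abs_div, _root_.abs_of_pos (by positivity : (0:ℝ) < 2*β₂)]
    have hc2T : 2*T ≤ -c := by
      rw [← habs_c] at hbig
      rwa [abs_of_neg hcneg] at hbig
    have hrefl : (∫ u in c..(T + c), F μ u) = ∫ u in (-(T+c))..(-c), F μ u := Feven μ c (T+c)
    rw [hrefl]
    have hapos : 0 < -(T + c) := by linarith
    have := tailF μ (-(T+c)) (-c) hμ hapos (by linarith)
    refine this.trans ?_
    rw [div_le_div_iff₀ (by positivity) (by positivity)]
    have hkey : Real.pi * |β₁| ≤ 2 * (μ * -(T+c)) := by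
      have h1 : -(T+c) ≥ -c/2 := by linarith
      have h2 : μ * -(T+c) ≥ μ * (-c/2) := by
        apply mul_le_mul_of_nonneg_left h1 hμ.le
      have h3 : μ * (-c/2) = Real.pi * β₂ * (-c) := by rw [hμdef]; ring
      have h4 : Real.pi * β₂ * (-c) = Real.pi * β₂ * (|β₁|/(2*β₂)) := by
        rw [← habs_c, abs_of_neg hcneg]
      have h5 : Real.pi * β₂ * (|β₁|/(2*β₂)) = Real.pi * |β₁| / 2 := by
        field_simp
      nlinarith
    linarith
  · -- β₁ > 0, c > 0
    have hcpos : 0 < c := by rw [hc]; positivity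
    have := tailF μ c (T + c) hμ hcpos (by linarith)
    refine this.trans ?_
    have hμc : μ * c = Real.pi * β₁ := by
      rw [hμdef, hc]
      field_simp
    rw [hμc, _root_.abs_of_pos hpos]
    rw [div_le_div_iff₀ (by positivity) (by positivity)]
    nlinarith [Real.pi_pos, mul_pos Real.pi_pos hpos]

lemma fresG (β₁ β₂ T : ℝ) (hβ₂ : 0 < β₂) :
    ‖G β₁ β₂ T‖ ≤ 4 / Real.sqrt β₂ := by
  set c : ℝ := β₁/(2*β₂) with hc
  set μ : ℝ := 2*Real.pi*β₂ with hμdef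
  have hμ : 0 < μ := by rw [hμdef]; positivity
  have habsG : ‖G β₁ β₂ T‖ = ‖∫ u in c..(T + c), F μ u‖ := by
    rw [squareG β₁ β₂ T hβ₂.ne', norm_mul]
    have harg : (-(2 * (Real.pi:ℂ) * Complex.I) * (β₂:ℂ) * ((c:ℝ):ℂ)^2)
        = ((-(2 * Real.pi) * β₂ * c^2 : ℝ) : ℂ) * I := by push_cast; ring
    rw [harg, Complex.norm_exp_ofReal_mul_I, one_mul]
  rw [habsG]
  refine (fresnel μ c (T + c) hμ).trans ?_
  have hle : β₂ ≤ μ := by nlinarith [Real.pi_gt_three]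
  have h1 : Real.sqrt β₂ ≤ Real.sqrt μ := Real.sqrt_le_sqrt hle
  have h2 : 0 < Real.sqrt β₂ := Real.sqrt_pos.2 hβ₂
  apply div_le_div_of_nonneg_left (by norm_num) h2 h1

theorem oscillatory_integral_bound :
    ∃ C : ℝ, ∀ β₁ β₂ : ℝ, ∀ N : ℕ, 1 ≤ N →
      ‖∫ γ in (0:ℝ)..(N : ℝ),
          Complex.exp (2 * Real.pi * Complex.I * (β₁ * γ + β₂ * γ ^ 2))‖ ≤
        C * N * (1 + |β₁| * N + |β₂| * (N : ℝ) ^ 2) ^ (-(1:ℝ)/2) := by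
  refine ⟨100, fun β₁ β₂ N hN => ?_⟩
  have hT1 : (1:ℝ) ≤ (N:ℝ) := by exact_mod_cast hN
  have hT0 : (0:ℝ) < (N:ℝ) := by linarith
  set T : ℝ := (N:ℝ) with hTdef
  have hmain : ∀ b₁ b₂ : ℝ, 0 ≤ b₂ →
      ‖G b₁ b₂ T‖ ≤ 100 * T * (1 + |b₁| * T + |b₂| * T ^ 2) ^ (-(1:ℝ)/2) := by
    intro b₁ b₂ hb₂
    have hb2abs : |b₂| = b₂ := _root_.abs_of_nonneg hb₂
    set A : ℝ := 1 + |b₁| * T + |b₂| * T ^ 2 with hAdef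
    have hterm1 : 0 ≤ |b₁| * T := mul_nonneg (abs_nonneg _) hT0.le
    have hterm2 : 0 ≤ |b₂| * T ^ 2 := mul_nonneg (abs_nonneg _) (sq_nonneg _)
    have hA1 : 1 ≤ A := by rw [hAdef]; linarith
    have hA0 : 0 < A := by linarith
    have hsA : 0 < Real.sqrt A := Real.sqrt_pos.2 hA0
    have hsq : Real.sqrt A * Real.sqrt A = A := Real.mul_self_sqrt hA0.le
    have hrpow : A ^ (-(1:ℝ)/2) = (Real.sqrt A)⁻¹ := by
      rw [show (-(1:ℝ)/2) = -(1/2:ℝ) by norm_num, Real.rpow_neg hA0.le, ← Real.sqrt_eq_rpow]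
    rw [hrpow, show 100 * T * (Real.sqrt A)⁻¹ = 100 * T / Real.sqrt A from by
      rw [div_eq_mul_inv]]
    rcases lt_or_ge A 36 with hA36 | hA36
    · -- trivial bound
      have h1 := trivG b₁ b₂ T hT0.le
      have h2 : Real.sqrt A ≤ 6 := by
        have := Real.sqrt_le_sqrt hA36.le
        rwa [show (36:ℝ) = 6^2 by norm_num, Real.sqrt_sq (by norm_num : (0:ℝ) ≤ 6)] at this
      have h3 : T ≤ 100 * T / Real.sqrt A := by
        rw [le_div_iff₀ hsA]
        nlinarith
      linarith
    · have h6 : (6:ℝ) ≤ Real.sqrt A := by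
        have := Real.sqrt_le_sqrt hA36
        rwa [show (36:ℝ) = 6^2 by norm_num, Real.sqrt_sq (by norm_num : (0:ℝ) ≤ 6)] at this
      have hA6 : Real.sqrt A ≤ A/6 := by nlinarith
      rcases le_or_gt (A/6) (b₂ * T^2) with hBig | hSmall
      · -- Fresnel case
        have hb2pos : 0 < b₂ := by nlinarith [sq_nonneg T]
        have hsb : 0 < Real.sqrt b₂ := Real.sqrt_pos.2 hb2pos
        have hsbsq : Real.sqrt b₂ * Real.sqrt b₂ = b₂ := Real.mul_self_sqrt hb2pos.le
        have h1 := fresG b₁ b₂ T hb2pos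
        have h2 : Real.sqrt A ≤ 3 * Real.sqrt b₂ * T := by
          have e1 : Real.sqrt A ≤ Real.sqrt (9 * b₂ * T^2) :=
            Real.sqrt_le_sqrt (by nlinarith)
          have e2 : Real.sqrt (9 * b₂ * T^2) = 3 * Real.sqrt b₂ * T := by
            rw [show 9 * b₂ * T^2 = (3 * Real.sqrt b₂ * T)^2 from by
              rw [mul_pow, mul_pow]; rw [sq (Real.sqrt b₂), hsbsq]; ring]
            exact Real.sqrt_sq (by positivity)
          linarith
        have h3 : 4 / Real.sqrt b₂ ≤ 100 * T / Real.sqrt A := by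
          rw [div_le_div_iff₀ hsb hsA]
          have hx : 0 ≤ Real.sqrt b₂ * T := by positivity
          linarith
        linarith
      · -- first derivative case
        have hb1T : (29/36) * A ≤ |b₁| * T := by
          have : |b₂| * T^2 < A/6 := by rw [hb2abs]; exact hSmall
          have h36 : A/36 ≥ 1 := by linarith
          rw [hAdef]
          rw [hAdef] at this h36
          linarith
        have hb1pos : 0 < |b₁| := by nlinarith
        have hb1ne : b₁ ≠ 0 := by
          intro h
          rw [h, abs_zero] at hb1pos
          exact lt_irrefl 0 hb1pos
        have hGb : ‖G b₁ b₂ T‖ ≤ 2/(Real.pi * |b₁|) := by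
          rcases eq_or_lt_of_le hb₂ with h0 | hb2pos
          · have := linG b₁ T hb1ne
            rw [← h0]
            have hpos : 0 < Real.pi * |b₁| := by positivity
            calc ‖G b₁ 0 T‖ ≤ 1/(Real.pi * |b₁|) := this
              _ ≤ 2/(Real.pi * |b₁|) := by gcongr <;> norm_num
          · apply quadG b₁ b₂ T hb1ne hb2pos hT0.le
            rw [le_div_iff₀ (by positivity : (0:ℝ) < 2*b₂)]
            have k1 : b₂ * T^2 < (6/29) * (|b₁| * T) := by linarith
            have k2 : b₂ * T < (6/29) * |b₁| := by
              refine lt_of_mul_lt_mul_right ?_ hT0.le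
              calc b₂ * T * T = b₂ * T^2 := by ring
                _ < (6/29) * (|b₁| * T) := k1
                _ = (6/29) * |b₁| * T := by ring
            linarith
        have hfin : 2/(Real.pi * |b₁|) ≤ 100 * T / Real.sqrt A := by
          rw [div_le_div_iff₀ (by positivity) hsA]
          have hπ : (3:ℝ) ≤ Real.pi := Real.pi_gt_three.le
          have hTb : 0 ≤ T * |b₁| := by positivity
          have hππ : 3 * (T * |b₁|) ≤ Real.pi * (T * |b₁|) :=
            mul_le_mul_of_nonneg_right hπ hTb
          linarith
        linarith
  rcases le_or_gt 0 β₂ with h | h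
  · exact hmain β₁ β₂ h
  · have := hmain (-β₁) (-β₂) (by linarith)
    rw [conjG, abs_neg, abs_neg] at this
    exact this
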